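/- On a Riemannian Π-manifold, the (0,3)-torsion tensor of the first natural connection satisfies Ṫ(x,y,z) = −(1/2){F(x,φy,z) − F(y,φx,z)} − (1/2)η(z){F(x,φy,ξ) − F(y,φx,ξ)} + η(y)F(x,φz,ξ) − η(x)F(y,φz,ξ). -/

import Mathlib

/-!
Since `∇` is torsion-free, `Ṫ(x,y,z) = Q(x,y,z) − Q(y,x,z)` for the deformation
`Q(x,y,z) = g(Ḋₓy − ∇ₓy, z)`. By definition `Q` is expressed through `F(x,φy,z)`,
`(∇ₓη)(y)` and `(∇ₓη)(z)`, and `(∇ₓη)(y) = −F(x,φy,ξ)`: apply `η` to `∇ₓ` of the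
decomposition `y = φ²y + η(y)ξ`, using that `∇ₓξ ⊥ ξ` because `g(ξ,ξ) = 1` is constant.
-/

/-- Algebraic model of a Riemannian Π-manifold: `V` is the module of vector fields
over the commutative ring `C` of (smooth) functions, `g` the metric, `(phi, xi, eta)`
the Π-structure, `d` the directional-derivative action of vector fields on functions,
`nabla` the Levi-Civita connection (torsion-free w.r.t. the bracket `lie` and
metric-compatible), together with the standard identities of the Π-structure. -/
structure RPM (C : Type*) (V : Type*) [CommRing C] [Algebra ℝ C]
    [AddCommGroup V] [Module C V] where
  g : V →ₗ[C] V →ₗ[C] C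
  phi : V →ₗ[C] V
  xi : V
  eta : V →ₗ[C] C
  d : V → C → C
  nabla : V → V → V
  lie : V → V → V
  g_symm : ∀ x y, g x y = g y x
  phi_xi : phi xi = 0
  phi_sq : ∀ x, phi (phi x) = x - eta x • xi
  eta_phi : ∀ x, eta (phi x) = 0
  eta_xi : eta xi = 1
  g_phi_phi : ∀ x y, g (phi x) (phi y) = g x y - eta x * eta y
  g_phi : ∀ x y, g (phi x) y = g x (phi y)
  g_xi : ∀ x, g x xi = eta x
  d_one : ∀ x, d x 1 = 0
  d_mul : ∀ x f h, d x (f * h) = f * d x h + h * d x f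
  nabla_add_left : ∀ x y z, nabla (x + y) z = nabla x z + nabla y z
  nabla_smul_left : ∀ (f : C) (x y : V), nabla (f • x) y = f • nabla x y
  nabla_add_right : ∀ x y z, nabla x (y + z) = nabla x y + nabla x z
  nabla_leibniz : ∀ (x : V) (f : C) (y : V), nabla x (f • y) = d x f • y + f • nabla x y
  torsion_free : ∀ x y, nabla x y - nabla y x = lie x y
  metric_compat : ∀ x y z, d x (g y z) = g (nabla x y) z + g y (nabla x z)

namespace RPM

variable {C : Type*} {V : Type*} [CommRing C] [Algebra ℝ C] [AddCommGroup V] [Module C V]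

/-- The fundamental tensor `F(x,y,z) = g((∇ₓφ)y, z)`. -/
def F (M : RPM C V) (x y z : V) : C :=
  M.g (M.nabla x (M.phi y) - M.phi (M.nabla x y)) z

/-- The constant function 1/2. -/
noncomputable def half (M : RPM C V) : C := algebraMap ℝ C (1 / 2)

/-- The first natural connection
`Ḋₓy = ∇ₓy − (1/2){(∇ₓφ)(φy) − (∇ₓη)(y)·ξ} − η(y)∇ₓξ`, where
`(∇ₓφ)(φy) = ∇ₓ(φ²y) − φ(∇ₓ(φy))` and `(∇ₓη)(y) = g(∇ₓξ, y)`. -/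
noncomputable def D1 (M : RPM C V) (x y : V) : V :=
  M.nabla x y
    - M.half • ((M.nabla x (M.phi (M.phi y)) - M.phi (M.nabla x (M.phi y)))
        - M.g (M.nabla x M.xi) y • M.xi)
    - M.eta y • M.nabla x M.xi

/-- The torsion of the first natural connection. -/
noncomputable def T1 (M : RPM C V) (x y : V) : V := M.D1 x y - M.D1 y x - M.lie x y

/-- The Lee form ω = F(ξ,ξ,·). -/
def omegaF (M : RPM C V) (z : V) : C := M.F M.xi M.xi z

variable (M : RPM C V)

lemma half_mul_two : M.half * 2 = 1 := by
  rw [half, ← map_ofNat (algebraMap ℝ C) 2, ← map_mul]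
  norm_num

lemma g_xi_left (w : V) : M.g M.xi w = M.eta w :=
  (M.g_symm _ _).trans (M.g_xi w)

lemma g_nabla_xi_xi (x : V) : M.g (M.nabla x M.xi) M.xi = 0 := by
  have h := M.metric_compat x M.xi M.xi
  rw [M.g_xi, M.eta_xi, M.d_one, M.g_xi_left, ← M.g_xi] at h
  linear_combination (-M.half) * h - M.g (M.nabla x M.xi) M.xi * M.half_mul_two

lemma eta_nabla (x w : V) :
    M.eta (M.nabla x w) = M.d x (M.eta w) - M.g (M.nabla x M.xi) w := by
  have h := M.metric_compat x w M.xi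
  rw [M.g_xi] at h
  rw [← M.g_xi (M.nabla x w)]
  linear_combination M.g_symm (M.nabla x M.xi) w - h

lemma F_phi_xi (x y : V) :
    M.F x (M.phi y) M.xi = -M.g (M.nabla x M.xi) y := by
  have h_split : M.nabla x y
      = M.nabla x (M.phi (M.phi y)) + (M.d x (M.eta y) • M.xi + M.eta y • M.nabla x M.xi) := by
    conv_lhs => rw [show y = M.phi (M.phi y) + M.eta y • M.xi by rw [M.phi_sq]; abel]
    rw [M.nabla_add_right, M.nabla_leibniz]
  have h_eta := congrArg M.eta h_split
  rw [M.eta_nabla x y, map_add, map_add, map_smul, map_smul, M.eta_xi,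
    ← M.g_xi (M.nabla x M.xi), M.g_nabla_xi_xi, smul_eq_mul, smul_eq_mul] at h_eta
  rw [F, map_sub, LinearMap.sub_apply, M.g_xi, M.g_xi, M.eta_phi]
  linear_combination -h_eta

lemma T1_eq_sub (x y : V) :
    M.T1 x y = (M.D1 x y - M.nabla x y) - (M.D1 y x - M.nabla y x) := by
  rw [T1, ← M.torsion_free]
  abel

lemma g_D1_sub_nabla (x y z : V) :
    M.g (M.D1 x y - M.nabla x y) z
      = - M.half * M.F x (M.phi y) z - M.half * (M.eta z * M.F x (M.phi y) M.xi)
        + M.eta y * M.F x (M.phi z) M.xi := by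
  rw [M.F_phi_xi, M.F_phi_xi]
  simp only [D1, F, map_sub, map_smul, LinearMap.sub_apply, LinearMap.smul_apply,
    smul_eq_mul, M.g_xi_left]
  ring

end RPM

open RPM

variable {C : Type*} {V : Type*} [CommRing C] [Algebra ℝ C] [AddCommGroup V] [Module C V]

/-- The (0,3)-torsion of the first natural connection satisfies
`Ṫ(x,y,z) = −(1/2){F(x,φy,z) − F(y,φx,z)} − (1/2)η(z){F(x,φy,ξ) − F(y,φx,ξ)}
+ η(y)F(x,φz,ξ) − η(x)F(y,φz,ξ)`. -/
theorem stmt13 (M : RPM C V) :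
    ∀ x y z : V,
      M.g (M.T1 x y) z
        = - M.half * (M.F x (M.phi y) z - M.F y (M.phi x) z)
          - M.half * (M.eta z * (M.F x (M.phi y) M.xi - M.F y (M.phi x) M.xi))
          + M.eta y * M.F x (M.phi z) M.xi - M.eta x * M.F y (M.phi z) M.xi := by
  intro x y z
  rw [M.T1_eq_sub, map_sub, LinearMap.sub_apply, M.g_D1_sub_nabla, M.g_D1_sub_nabla]
  ring
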